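/- Let A be a Noetherian integrally closed domain with fraction field F, let M be an A-module, let m be a positive integer, let s : M × ⋯ × M → A (m factors) be an m-multilinear A-linear map, let t : M → A be an A-linear map, and let ρ ∈ F be an element such that for all x₁, …, x_m ∈ M one has s(x₁, …, x_m) = ρ · t(x₁) ⋯ t(x_m) as elements of F. Then there exists a field extension L of F generated over F by a single element z with z^m = ρ (in particular [L : F] ≤ m), such that, writing B for the integral closure of A in L, there is an A-linear map t̄ : M → B satisfying t̄(x₁) ⋯ t̄(x_m) = s(x₁, …, x_m) (viewing s(x₁, …, x_m) ∈ A ⊆ B) for all x₁, …, x_m ∈ M. (One may take t̄(x) = z · t(x).) -/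

import Mathlib

/-!
Adjoin to `F` a root `z` of an irreducible factor of `X ^ m - ρ` and put `t̄ = z • t`. Then
`t̄(x₁) ⋯ t̄(x_m) = ρ · t(x₁) ⋯ t(x_m) = s(x₁, …, x_m)`, and taking all `xᵢ = x` shows that
`t̄(x)` is a root of the monic polynomial `X ^ m - s(x, …, x)` over `A`.
-/

universe uA uF uM

open Polynomial

theorem Polynomial.exists_field_aeval_eq_zero_adjoin_eq_top_rank_le {F : Type uF} [Field F]
    {p : F[X]} (hp : 0 < p.natDegree) :
    ∃ (L : Type uF) (_ : Field L) (_ : Algebra F L) (z : L),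
      aeval z p = 0 ∧ Algebra.adjoin F {z} = ⊤ ∧ Module.rank F L ≤ p.natDegree := by
  obtain ⟨f, hf, hfp⟩ := exists_irreducible_of_natDegree_pos hp
  have : Fact (Irreducible f) := ⟨hf⟩
  refine ⟨AdjoinRoot f, inferInstance, inferInstance, AdjoinRoot.root f, ?_,
    AdjoinRoot.adjoinRoot_eq_top, ?_⟩
  · rwa [AdjoinRoot.aeval_eq, AdjoinRoot.mk_eq_zero]
  · rw [rank_eq_card_basis (AdjoinRoot.powerBasis hf.ne_zero).basis, Fintype.card_fin,
      AdjoinRoot.powerBasis_dim, Nat.cast_le]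
    exact natDegree_le_of_dvd hfp (ne_zero_of_natDegree_gt hp)

theorem RingHom.isIntegralElem_of_pow_eq {A L : Type*} [CommRing A] [CommRing L] (φ : A →+* L)
    {m : ℕ} (hm : m ≠ 0) {x : L} {a : A} (h : x ^ m = φ a) : φ.IsIntegralElem x :=
  ⟨X ^ m - C a, monic_X_pow_sub_C a hm, by simp [h]⟩

theorem mth_root_of_tensor_power_pfaff_general
    (A : Type uA) [CommRing A]
    (F : Type uF) [Field F] [Algebra A F]
    (M : Type uM) [AddCommGroup M] [Module A M]
    (m : ℕ) (hm : 0 < m)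
    (s : MultilinearMap A (fun _ : Fin m => M) A)
    (t : M →ₗ[A] A)
    (ρ : F)
    (hst : ∀ x : Fin m → M,
      algebraMap A F (s x) = ρ * ∏ i, algebraMap A F (t (x i))) :
    ∃ (L : Type uF) (_ : Field L) (_ : Algebra F L) (z : L),
      z ^ m = algebraMap F L ρ ∧
      Algebra.adjoin F {z} = ⊤ ∧
      Module.rank F L ≤ m ∧
      ∃ tbar : M → L,
        (∀ x : M, ∃ P : Polynomial A, P.Monic ∧
          Polynomial.eval₂ ((algebraMap F L).comp (algebraMap A F)) (tbar x) P = 0) ∧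
        (∀ x y : M, tbar (x + y) = tbar x + tbar y) ∧
        (∀ (a : A) (x : M),
          tbar (a • x) = ((algebraMap F L).comp (algebraMap A F)) a * tbar x) ∧
        (∀ x : Fin m → M,
          (∏ i, tbar (x i))
            = ((algebraMap F L).comp (algebraMap A F)) (s x)) := by
  obtain ⟨L, _, _, z, hz, hadj, hrank⟩ :=
    exists_field_aeval_eq_zero_adjoin_eq_top_rank_le (p := X ^ m - C ρ)
      (by rwa [natDegree_X_pow_sub_C])
  rw [map_sub, map_pow, aeval_X, aeval_C, sub_eq_zero] at hz
  rw [natDegree_X_pow_sub_C] at hrank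
  set φ := (algebraMap F L).comp (algebraMap A F)
  have hprod (x : Fin m → M) : ∏ i, z * φ (t (x i)) = φ (s x) := by
    rw [Finset.prod_mul_distrib, Finset.prod_const, Finset.card_univ, Fintype.card_fin, hz,
      RingHom.comp_apply, hst, map_mul, map_prod]
    rfl
  refine ⟨L, inferInstance, inferInstance, z, hz, hadj, hrank, fun x => z * φ (t x),
    fun x => φ.isIntegralElem_of_pow_eq hm.ne' (a := s fun _ => x) ?_,
    fun x y => by simp [mul_add],
    fun a x => by simp only [map_smul, smul_eq_mul, map_mul]; ring, hprod⟩
  simpa using hprod fun _ => x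

/-- **Extracting an `m`-th root of a tensor-power Pfaff field after a finite cover**
(affine, module-theoretic form).

Let `A` be a Noetherian integrally closed domain with fraction field `F`, `M` an `A`-module,
`m > 0`, `s : M^m → A` an `m`-multilinear `A`-linear map, `t : M → A` an `A`-linear map and
`ρ ∈ F` with `s(x₁, …, x_m) = ρ · t(x₁) ⋯ t(x_m)` in `F` for all `xᵢ ∈ M`.  Then there is a
field extension `L` of `F` generated over `F` by a single element `z` with `z^m = ρ` (in
particular `[L : F] ≤ m`) such that, with `B` the integral closure of `A` in `L`, there is an
`A`-linear map `t̄ : M → B` (encoded as a map `M → L` whose values are integral over `A`,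
additive and compatible with the `A`-action through `A → F → L`) satisfying
`t̄(x₁) ⋯ t̄(x_m) = s(x₁, …, x_m)` in `L` for all `xᵢ ∈ M`. -/
theorem mth_root_of_tensor_power_pfaff
    (A : Type uA) [CommRing A] [IsDomain A] [IsNoetherianRing A] [IsIntegrallyClosed A]
    (F : Type uF) [Field F] [Algebra A F] [IsFractionRing A F]
    (M : Type uM) [AddCommGroup M] [Module A M]
    (m : ℕ) (hm : 0 < m)
    (s : MultilinearMap A (fun _ : Fin m => M) A)
    (t : M →ₗ[A] A)
    (ρ : F)
    (hst : ∀ x : Fin m → M,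
      algebraMap A F (s x) = ρ * ∏ i, algebraMap A F (t (x i))) :
    ∃ (L : Type uF) (_ : Field L) (_ : Algebra F L) (z : L),
      z ^ m = algebraMap F L ρ ∧
      Algebra.adjoin F {z} = ⊤ ∧
      Module.rank F L ≤ m ∧
      ∃ tbar : M → L,
        (∀ x : M, ∃ P : Polynomial A, P.Monic ∧
          Polynomial.eval₂ ((algebraMap F L).comp (algebraMap A F)) (tbar x) P = 0) ∧
        (∀ x y : M, tbar (x + y) = tbar x + tbar y) ∧
        (∀ (a : A) (x : M),
          tbar (a • x) = ((algebraMap F L).comp (algebraMap A F)) a * tbar x) ∧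
        (∀ x : Fin m → M,
          (∏ i, tbar (x i))
            = ((algebraMap F L).comp (algebraMap A F)) (s x)) :=
  mth_root_of_tensor_power_pfaff_general A F M m hm s t ρ hst
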